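/- Let X be a probability distribution on {0,1}^{n1} and f : {0,1}^{n1} → {0,1}^{n2} a function such that the pushforward Y = f(X) is an (n2,k)-source (k a natural number). Then there exist a natural number m, flat (n1,k)-sources X_1, ..., X_m (each uniform on a subset of {0,1}^{n1} of size 2^k), functions f_1, ..., f_m : {0,1}^{n1} → {0,1}^{n2} each of which is injective on the support of the corresponding X_i, and positive reals v_1, ..., v_m with Σ_i v_i = 1, such that X = Σ_i v_i X_i and, for every i, the pushforward distributions f(X_i) and f_i(X_i) are equal. -/

import Mathlib

open Finset
open scoped Classical

noncomputable section

abbrev BS (n : ℕ) := Fin n → Bool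

def uniformD (α : Type*) [Fintype α] : α → ℝ := fun _ => (Fintype.card α : ℝ)⁻¹

def prodD {α β : Type*} (p : α → ℝ) (q : β → ℝ) : α × β → ℝ := fun z => p z.1 * q z.2

def pushD {α β : Type*} [Fintype α] (f : α → β) (p : α → ℝ) : β → ℝ :=
  fun b => ∑ a, if f a = b then p a else 0

def SD {α : Type*} [Fintype α] (p q : α → ℝ) : ℝ := (∑ a, |p a - q a|) / 2

def IsDist {α : Type*} [Fintype α] (p : α → ℝ) : Prop := (∀ a, 0 ≤ p a) ∧ ∑ a, p a = 1

def mEntGe {α : Type*} (p : α → ℝ) (k : ℝ) : Prop := ∀ a, p a ≤ (2:ℝ) ^ (-k)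

def IsNME {X Y M : Type*} [Fintype X] [Fintype Y] [Fintype M]
    (E : X → Y → M) (k ε : ℝ) : Prop :=
  ∀ μX : X → ℝ, IsDist μX → mEntGe μX k →
    ∀ A : Y → Y, (∀ y, A y ≠ y) →
      SD (pushD (fun xy : X × Y => (E xy.1 xy.2, E xy.1 (A xy.2), xy.2)) (prodD μX (uniformD Y)))
         (prodD (uniformD M)
           (pushD (fun xy : X × Y => (E xy.1 (A xy.2), xy.2)) (prodD μX (uniformD Y)))) ≤ ε

def IsNMEr {X Y M : Type*} [Fintype X] [Fintype Y] [Fintype M]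
    (r : ℕ) (E : X → Y → M) (k ε : ℝ) : Prop :=
  ∀ μX : X → ℝ, IsDist μX → mEntGe μX k →
    ∀ A : Fin r → Y → Y, (∀ i y, A i y ≠ y) →
      SD (pushD (fun xy : X × Y =>
            (E xy.1 xy.2, fun i => E xy.1 (A i xy.2), xy.2)) (prodD μX (uniformD Y)))
         (prodD (uniformD M)
           (pushD (fun xy : X × Y =>
             ((fun i => E xy.1 (A i xy.2)), xy.2)) (prodD μX (uniformD Y)))) ≤ ε

/-- A flat source with min-entropy `k`: the uniform distribution over a subset of size `2^k`. -/
def IsFlat {α : Type*} [Fintype α] (k : ℕ) (μ : α → ℝ) : Prop :=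
  ∃ S : Finset α, S.card = 2 ^ k ∧ ∀ a, μ a = if a ∈ S then ((2:ℝ) ^ k)⁻¹ else 0

/-
Work with unnormalised measures `μ` of mass `t = ∑ μ` satisfying `K · f(μ)(y) ≤ t` (here `K = 2^k`).
Such a `μ ≠ 0` has at most `K` full fibres (`K · f(μ)(y) = t`) and at least `K` charged ones, so
there is a `K`-set `S` in the support of `μ`, meeting each fibre at most once and every full fibre.
Subtracting `w` times the uniform distribution on `S` keeps the condition as long as `w` is at most
`K · μ(x)` for `x ∈ S` and the slack `t - K · f(μ)(y)` of every fibre missed by `S`. For the largest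
such `w` a point of `S` leaves the support or a missed fibre becomes full, so iterating ends at `0`.
-/

section

variable {α β : Type*} {f : α → β} {K : ℕ} {μ : α → ℝ} {S : Finset α} {w : ℝ}

def uniformOn (S : Finset α) : α → ℝ := fun a => if a ∈ S then (S.card : ℝ)⁻¹ else 0

lemma setOf_uniformOn_ne_zero_subset (S : Finset α) : {a | uniformOn S a ≠ 0} ⊆ S :=
  fun _ ha => by_contra fun h => ha (if_neg h)

lemma sub_smul_uniformOn_apply (hS : S.card = K) (x : α) :
    (μ - w • uniformOn S) x = if x ∈ S then μ x - w / K else μ x := by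
  simp only [Pi.sub_apply, Pi.smul_apply, smul_eq_mul, uniformOn, hS]
  split_ifs <;> ring

lemma sub_smul_uniformOn_nonneg (hK : 0 < K) (hS : S.card = K) (hμ : 0 ≤ μ)
    (hw : ∀ x ∈ S, w ≤ K * μ x) : 0 ≤ μ - w • uniformOn S := fun x => by
  rw [Pi.zero_apply, sub_smul_uniformOn_apply hS]
  split_ifs with hx
  · rw [sub_nonneg, div_le_iff₀ (by positivity)]
    linarith [hw x hx]
  · exact hμ x

def IsFlatMixture (f : α → β) (K : ℕ) (μ : α → ℝ) : Prop :=
  ∃ (m : ℕ) (S : Fin m → Finset α) (w : Fin m → ℝ), (∀ i, 0 < w i) ∧ (∀ i, (S i).card = K) ∧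
    (∀ i, Set.InjOn f (S i)) ∧ μ = ∑ i, w i • uniformOn (S i)

lemma isFlatMixture_zero : IsFlatMixture f K 0 :=
  ⟨0, Fin.elim0, Fin.elim0, fun i => i.elim0, fun i => i.elim0, fun i => i.elim0, by simp⟩

lemma IsFlatMixture.add_smul_uniformOn (h : IsFlatMixture f K μ) (hw : 0 < w)
    (hS : S.card = K) (hf : Set.InjOn f S) : IsFlatMixture f K (μ + w • uniformOn S) := by
  obtain ⟨m, T, v, hv, hT, hTf, rfl⟩ := h
  refine ⟨m + 1, Fin.cons S T, Fin.cons w v, Fin.cases hw hv, Fin.cases hS hT,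
    Fin.cases hf hTf, ?_⟩
  simp [Fin.sum_univ_succ, add_comm]

section

variable [Fintype α]

lemma sum_uniformOn (hS : S.Nonempty) : ∑ a, uniformOn S a = 1 := by
  simp [uniformOn, hS.card_pos.ne']

lemma isFlat_uniformOn {k : ℕ} (hS : S.card = 2 ^ k) : IsFlat k (uniformOn S) :=
  ⟨S, hS, fun a => by simp [uniformOn, hS]⟩

lemma sum_sub_smul_uniformOn (hS : S.Nonempty) :
    ∑ a, (μ - w • uniformOn S) a = ∑ a, μ a - w := by
  simp [Finset.sum_sub_distrib, ← Finset.mul_sum, sum_uniformOn hS]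

lemma pushD_sub_smul (f : α → β) (μ ν : α → ℝ) (w : ℝ) (y : β) :
    pushD f (μ - w • ν) y = pushD f μ y - w * pushD f ν y := by
  simp only [pushD, Pi.sub_apply, Pi.smul_apply, smul_eq_mul, Finset.mul_sum,
    ← Finset.sum_sub_distrib]
  refine Finset.sum_congr rfl fun a _ => ?_
  split_ifs <;> ring

lemma pushD_uniformOn (hf : Set.InjOn f S) (y : β) :
    pushD f (uniformOn S) y = if y ∈ S.image f then (S.card : ℝ)⁻¹ else 0 := by
  have h : pushD f (uniformOn S) y = ∑ a ∈ S, if f a = y then (S.card : ℝ)⁻¹ else 0 := by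
    simp only [pushD, uniformOn]
    rw [← Finset.sum_subset (Finset.subset_univ S)]
    · exact Finset.sum_congr rfl fun a ha => by simp [ha]
    · intro a _ ha
      simp [ha]
  rw [h, ← Finset.sum_image (f := fun z => if z = y then (S.card : ℝ)⁻¹ else 0) hf]
  simp

lemma pushD_sub_smul_uniformOn (hS : S.card = K) (hf : Set.InjOn f S) (y : β) :
    pushD f (μ - w • uniformOn S) y =
      if y ∈ S.image f then pushD f μ y - w / K else pushD f μ y := by
  rw [pushD_sub_smul, pushD_uniformOn hf, hS]
  split_ifs <;> ring

lemma pushD_sub_smul_uniformOn_le (hK : 0 < K) (hS : S.card = K) (hf : Set.InjOn f S)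
    (hp : ∀ y, K * pushD f μ y ≤ ∑ a, μ a)
    (hw : ∀ y ∉ S.image f, w ≤ ∑ a, μ a - K * pushD f μ y) (y : β) :
    K * pushD f (μ - w • uniformOn S) y ≤ ∑ a, (μ - w • uniformOn S) a := by
  rw [pushD_sub_smul_uniformOn hS hf, sum_sub_smul_uniformOn (Finset.card_pos.1 (hS ▸ hK))]
  split_ifs with hy
  · rw [mul_sub, mul_div_cancel₀ _ (by positivity)]
    linarith [hp y]
  · linarith [hw y hy]

lemma exists_ne_zero_of_pushD_ne_zero {y : β} (h : pushD f μ y ≠ 0) :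
    ∃ x, f x = y ∧ μ x ≠ 0 := by
  contrapose! h
  exact Finset.sum_eq_zero fun a _ => by split_ifs with hfa; exacts [h a hfa, rfl]

end

section

variable [Fintype β]

lemma card_filter_mul_eq_sum_le {q : β → ℝ} (hq : 0 ≤ q) (ht : 0 < ∑ y, q y) :
    (univ.filter fun y => (K : ℝ) * q y = ∑ y, q y).card ≤ K := by
  set t := ∑ y, q y
  set T := univ.filter fun y => (K : ℝ) * q y = t
  have h : (T.card : ℝ) * t ≤ K * t := calc
    (T.card : ℝ) * t = ∑ y ∈ T, (K : ℝ) * q y := by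
      rw [Finset.sum_congr rfl fun y hy => (Finset.mem_filter.1 hy).2, Finset.sum_const,
        nsmul_eq_mul]
    _ = K * ∑ y ∈ T, q y := (Finset.mul_sum _ _ _).symm
    _ ≤ K * t := by gcongr; exact Finset.sum_le_univ_sum_of_nonneg hq
  exact_mod_cast le_of_mul_le_mul_right h ht

lemma le_card_filter_ne_zero {q : β → ℝ} (hq : ∀ y, K * q y ≤ ∑ y, q y)
    (ht : 0 < ∑ y, q y) : K ≤ (univ.filter fun y => q y ≠ 0).card := by
  set t := ∑ y, q y
  set P := univ.filter fun y => q y ≠ 0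
  have h : (K : ℝ) * t ≤ P.card * t := calc
    (K : ℝ) * t = K * ∑ y ∈ P, q y := by rw [Finset.sum_filter_ne_zero]
    _ = ∑ y ∈ P, K * q y := Finset.mul_sum _ _ _
    _ ≤ ∑ y ∈ P, t := Finset.sum_le_sum fun y _ => hq y
    _ = P.card * t := by simp
  exact_mod_cast le_of_mul_le_mul_right h ht

variable [Fintype α]

lemma sum_pushD (f : α → β) (μ : α → ℝ) : ∑ y, pushD f μ y = ∑ a, μ a := by
  unfold pushD
  rw [Finset.sum_comm]
  simp

lemma exists_injOn_of_pushD_le (hμ : 0 ≤ μ) (ht : 0 < ∑ a, μ a)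
    (hp : ∀ y, K * pushD f μ y ≤ ∑ a, μ a) :
    ∃ S : Finset α, S.card = K ∧ Set.InjOn f S ∧ (∀ x ∈ S, μ x ≠ 0) ∧
      ∀ y, (K : ℝ) * pushD f μ y = ∑ a, μ a → y ∈ S.image f := by
  rw [← sum_pushD f] at ht hp ⊢
  have hpush : 0 ≤ pushD f μ := fun y =>
    Finset.sum_nonneg fun a _ => by split_ifs; exacts [hμ a, le_rfl]
  have htight : (univ.filter fun y => (K : ℝ) * pushD f μ y = ∑ y, pushD f μ y) ⊆
      univ.filter fun y => pushD f μ y ≠ 0 :=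
    Finset.monotone_filter_right _ fun y _ hy hy0 => by rw [hy0, mul_zero] at hy; linarith
  obtain ⟨Y, hTY, hYP, hYK⟩ := Finset.exists_subsuperset_card_eq htight
    (card_filter_mul_eq_sum_le hpush ht) (le_card_filter_ne_zero hp ht)
  choose g hg using fun y : Y =>
    exists_ne_zero_of_pushD_ne_zero (Finset.mem_filter.1 (hYP y.2)).2
  have hg_inj : Function.Injective g := fun y z h => Subtype.ext <| by
    rw [← (hg y).1, ← (hg z).1, h]
  refine ⟨univ.image g, ?_, ?_, ?_, ?_⟩
  · rw [Finset.card_image_of_injective _ hg_inj, Finset.card_univ, Fintype.card_coe, hYK]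
  · simp only [Finset.coe_image, Finset.coe_univ, Set.image_univ]
    rintro _ ⟨y, rfl⟩ _ ⟨z, rfl⟩ h
    rw [(hg y).1, (hg z).1] at h
    rw [Subtype.ext h]
  · simp only [Finset.mem_image, Finset.mem_univ, true_and]
    rintro _ ⟨y, rfl⟩
    exact (hg y).2
  · intro y hy
    have hyY : y ∈ Y := hTY (by simpa using hy)
    exact Finset.mem_image.2 ⟨g ⟨y, hyY⟩, by simp, (hg ⟨y, hyY⟩).1⟩

def peelPotential (f : α → β) (K : ℕ) (μ : α → ℝ) : ℕ :=
  (univ.filter fun a => μ a ≠ 0).card +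
    (univ.filter fun y => (K : ℝ) * pushD f μ y ≠ ∑ a, μ a).card

lemma peelPotential_sub_smul_uniformOn_lt (hK : 0 < K) (hS : S.card = K) (hf : Set.InjOn f S)
    (hSμ : ∀ x ∈ S, μ x ≠ 0) (htight : ∀ y, K * pushD f μ y = ∑ a, μ a → y ∈ S.image f)
    (hw : (∃ x ∈ S, w = K * μ x) ∨ ∃ y ∉ S.image f, w = ∑ a, μ a - K * pushD f μ y) :
    peelPotential f K (μ - w • uniformOn S) < peelPotential f K μ := by
  have hK' : (K : ℝ) ≠ 0 := by positivity
  have hsum := sum_sub_smul_uniformOn (μ := μ) (w := w) (Finset.card_pos.1 (hS ▸ hK))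
  have hsupp : (univ.filter fun a => (μ - w • uniformOn S) a ≠ 0) ⊆
      univ.filter fun a => μ a ≠ 0 :=
    Finset.monotone_filter_right _ fun x _ hx hx0 => hx <| by
      rw [sub_smul_uniformOn_apply hS, if_neg fun h => hSμ x h hx0, hx0]
  have hnontight : (univ.filter fun y =>
        (K : ℝ) * pushD f (μ - w • uniformOn S) y ≠ ∑ a, (μ - w • uniformOn S) a) ⊆
      univ.filter fun y => (K : ℝ) * pushD f μ y ≠ ∑ a, μ a :=
    Finset.monotone_filter_right _ fun y _ hy hy0 => hy <| by
      rw [pushD_sub_smul_uniformOn hS hf, if_pos (htight y hy0), hsum, ← hy0]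
      field_simp
  unfold peelPotential
  rcases hw with ⟨x, hx, rfl⟩ | ⟨y, hy, rfl⟩
  · refine add_lt_add_of_lt_of_le (Finset.card_lt_card ?_) (Finset.card_le_card hnontight)
    refine (Finset.ssubset_iff_of_subset hsupp).2 ⟨x, by simp [hSμ x hx], ?_⟩
    simp only [Finset.mem_filter, Finset.mem_univ, true_and, not_not]
    rw [sub_smul_uniformOn_apply hS, if_pos hx, mul_div_cancel_left₀ _ hK', sub_self]
  · refine add_lt_add_of_le_of_lt (Finset.card_le_card hsupp) (Finset.card_lt_card ?_)
    refine (Finset.ssubset_iff_of_subset hnontight).2 ⟨y, ?_, ?_⟩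
    · simp only [Finset.mem_filter, Finset.mem_univ, true_and]
      exact fun h => hy (htight y h)
    · simp only [Finset.mem_filter, Finset.mem_univ, true_and, not_not]
      rw [pushD_sub_smul_uniformOn hS hf, if_neg hy, hsum]
      ring

lemma exists_peel (hK : 0 < K) (hμ : 0 ≤ μ) (hμ0 : μ ≠ 0)
    (hp : ∀ y, K * pushD f μ y ≤ ∑ a, μ a) :
    ∃ (S : Finset α) (w : ℝ), S.card = K ∧ Set.InjOn f S ∧ 0 < w ∧ 0 ≤ μ - w • uniformOn S ∧
      (∀ y, K * pushD f (μ - w • uniformOn S) y ≤ ∑ a, (μ - w • uniformOn S) a) ∧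
      peelPotential f K (μ - w • uniformOn S) < peelPotential f K μ := by
  have ht : 0 < ∑ a, μ a := by
    obtain ⟨x, hx⟩ := Function.ne_iff.1 hμ0
    exact Finset.sum_pos' (fun a _ => hμ a)
      ⟨x, Finset.mem_univ x, lt_of_le_of_ne (hμ x) (Ne.symm hx)⟩
  obtain ⟨S, hS, hf, hSμ, htight⟩ := exists_injOn_of_pushD_le hμ ht hp
  set bounds := S.image (fun x => K * μ x) ∪
    (univ.filter (· ∉ S.image f)).image (fun y => ∑ a, μ a - K * pushD f μ y)
  have hne : bounds.Nonempty :=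
    ((Finset.card_pos.1 (hS ▸ hK)).image _).mono Finset.subset_union_left
  set w := bounds.min' hne
  have hwS : ∀ x ∈ S, w ≤ K * μ x := fun x hx =>
    Finset.min'_le _ _ (Finset.mem_union_left _ (Finset.mem_image_of_mem _ hx))
  have hwout : ∀ y ∉ S.image f, w ≤ ∑ a, μ a - K * pushD f μ y := fun y hy =>
    Finset.min'_le _ _ (Finset.mem_union_right _ (Finset.mem_image_of_mem _ (by simpa using hy)))
  have hw : 0 < w := (Finset.lt_min'_iff _ _).2 fun b hb => by
    rcases Finset.mem_union.1 hb with hb | hb <;> obtain ⟨z, hz, rfl⟩ := Finset.mem_image.1 hb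
    · exact mul_pos (by positivity) (lt_of_le_of_ne (hμ z) (Ne.symm (hSμ z hz)))
    · exact sub_pos.2 <| lt_of_le_of_ne (hp z) fun h => (Finset.mem_filter.1 hz).2 (htight z h)
  have hw_mem : (∃ x ∈ S, w = K * μ x) ∨ ∃ y ∉ S.image f, w = ∑ a, μ a - K * pushD f μ y := by
    rcases Finset.mem_union.1 (Finset.min'_mem bounds hne) with hb | hb <;>
      obtain ⟨z, hz, hzw⟩ := Finset.mem_image.1 hb
    · exact .inl ⟨z, hz, hzw.symm⟩
    · exact .inr ⟨z, (Finset.mem_filter.1 hz).2, hzw.symm⟩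
  exact ⟨S, w, hS, hf, hw, sub_smul_uniformOn_nonneg hK hS hμ hwS,
    pushD_sub_smul_uniformOn_le hK hS hf hp hwout,
    peelPotential_sub_smul_uniformOn_lt hK hS hf hSμ htight hw_mem⟩

theorem isFlatMixture_of_pushD_le (hK : 0 < K) (hμ : 0 ≤ μ)
    (hp : ∀ y, K * pushD f μ y ≤ ∑ a, μ a) : IsFlatMixture f K μ := by
  induction hn : peelPotential f K μ using Nat.strong_induction_on generalizing μ with
  | _ n ih =>
  by_cases hμ0 : μ = 0
  · exact hμ0 ▸ isFlatMixture_zero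
  obtain ⟨S, w, hS, hf, hw, hμ', hp', hlt⟩ := exists_peel hK hμ hμ0 hp
  simpa using (ih _ (hn ▸ hlt) hμ' hp' rfl).add_smul_uniformOn hw hS hf

end

end

theorem stmt_5
    (n1 n2 k : ℕ)
    (μX : BS n1 → ℝ) (hX : IsDist μX)
    (f : BS n1 → BS n2)
    (hk : mEntGe (pushD f μX) (k:ℝ)) :
    ∃ (m : ℕ) (Xi : Fin m → (BS n1 → ℝ)) (fi : Fin m → (BS n1 → BS n2)) (v : Fin m → ℝ),
      (∀ i, 0 < v i) ∧ (∑ i, v i = 1) ∧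
      (∀ i, IsFlat k (Xi i)) ∧
      (∀ i, Set.InjOn (fi i) {a | Xi i a ≠ 0}) ∧
      (∀ a, μX a = ∑ i, v i * Xi i a) ∧
      (∀ i, pushD f (Xi i) = pushD (fi i) (Xi i)) := by
  have hp : ∀ y, ((2 ^ k : ℕ) : ℝ) * pushD f μX y ≤ ∑ a, μX a := fun y => by
    have hy := hk y
    rw [Real.rpow_neg (by norm_num), Real.rpow_natCast] at hy
    rw [hX.2, Nat.cast_pow, Nat.cast_ofNat, ← le_div_iff₀' (by positivity), one_div]
    exact hy
  obtain ⟨m, S, v, hv, hS, hf, hμ⟩ := isFlatMixture_of_pushD_le (by positivity) hX.1 hp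
  have hμa : ∀ a, μX a = ∑ i, v i * uniformOn (S i) a := fun a => by simp [hμ, Finset.sum_apply]
  refine ⟨m, fun i => uniformOn (S i), fun _ => f, v, hv, ?_, fun i => isFlat_uniformOn (hS i),
    fun i => (hf i).mono (setOf_uniformOn_ne_zero_subset _), hμa, fun _ => rfl⟩
  calc ∑ i, v i = ∑ i, v i * ∑ a, uniformOn (S i) a := Finset.sum_congr rfl fun i _ => by
        rw [sum_uniformOn (Finset.card_pos.1 ((hS i).symm ▸ by positivity)), mul_one]
    _ = ∑ a, μX a := by simp_rw [hμa, Finset.mul_sum]; exact Finset.sum_comm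
    _ = 1 := hX.2
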